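/- arXiv:2401.14319 — 3 statements merged into one kernel-verified Lean document; each statement's English description precedes it below -/
import Mathlib

section
/- Let L, z₁, x₁, z₂, x₂, ..., z_q, x_q be jointly distributed random variables where L takes values in finite subsets of a universe U, each xᵢ takes values in U, and the xᵢ are pairwise distinct (xᵢ ≠ xⱼ for i ≠ j almost surely). Given δ > 0, conditioned on a prefix (z₁,x₁,...,zᵢ), call xᵢ δ-heavy if Pr[xᵢ ∈ L | z₁,x₁,...,zᵢ] ≥ δ, and let S = {xᵢ : xᵢ is δ-heavy}. Then E[|S|] ≤ E[|L|]/δ. -/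
open scoped Classical

/-!
Conditioned on the history up to `zᵢ`, the sample space splits into classes, and `xᵢ` is heavy
on a whole class or nowhere in it. On a heavy class `C` we have `δ · Pr[C] ≤ Pr[C ∧ xᵢ ∈ L]`, so
summing over classes gives `δ · Pr[xᵢ heavy] ≤ Pr[xᵢ ∈ L]`. Summing over `i` and exchanging the
sums, `δ · E[#heavy indices] ≤ E[#{i | xᵢ ∈ L}] ≤ E[|L|]`, the last step because the `xᵢ` are
distinct.
-/

open Finset

theorem mul_sum_filter_condProb_ge_le {Ω β : Type*} [Fintype Ω] (μ : Ω → ℝ) (hμ : ∀ ω, 0 ≤ μ ω) (h : Ω → β)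
    (A : Ω → Prop) [DecidablePred A] (δ : ℝ) :
    δ * ∑ ω ∈ univ.filter (fun ω => δ * ∑ ω' ∈ univ.filter (fun ω' => h ω' = h ω), μ ω' ≤
        ∑ ω' ∈ univ.filter (fun ω' => h ω' = h ω ∧ A ω'), μ ω'), μ ω ≤
      ∑ ω ∈ univ.filter A, μ ω := by
  set P : β → Prop := fun b => δ * ∑ ω' ∈ univ.filter (fun ω' => h ω' = b), μ ω' ≤
    ∑ ω' ∈ univ.filter (fun ω' => h ω' = b ∧ A ω'), μ ω'
  have hmaps : ∀ s : Finset Ω, ∀ ω ∈ s, h ω ∈ univ.image h :=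
    fun _ ω _ => mem_image_of_mem h (mem_univ ω)
  calc δ * ∑ ω ∈ univ.filter (fun ω => P (h ω)), μ ω
      = ∑ b ∈ univ.image h, δ * ∑ ω ∈ (univ.filter (fun ω => P (h ω))).filter (fun ω => h ω = b),
          μ ω := by
        rw [← mul_sum, sum_fiberwise_of_maps_to (hmaps _)]
    _ ≤ ∑ b ∈ univ.image h, ∑ ω ∈ (univ.filter A).filter (fun ω => h ω = b), μ ω := by
        refine sum_le_sum fun b _ => ?_
        rw [filter_filter, filter_filter]
        by_cases hb : P b
        · have hclass : univ.filter (fun ω => P (h ω) ∧ h ω = b) = univ.filter (h · = b) :=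
            filter_congr fun ω _ => ⟨And.right, fun hω => ⟨hω ▸ hb, hω⟩⟩
          rw [hclass]
          exact hb.trans_eq (sum_congr (filter_congr fun _ _ => and_comm) fun _ _ => rfl)
        · have hempty : univ.filter (fun ω => P (h ω) ∧ h ω = b) = ∅ :=
            filter_false_of_mem fun ω _ ⟨hω, hωb⟩ => hb (hωb ▸ hω)
          rw [hempty, sum_empty, mul_zero]
          exact sum_nonneg fun ω _ => hμ ω
    _ = ∑ ω ∈ univ.filter A, μ ω := sum_fiberwise_of_maps_to (hmaps _) _

theorem sum_mul_card_filter {Ω ι : Type*} [Fintype Ω] [Fintype ι] (μ : Ω → ℝ)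
    (P : ι → Ω → Prop) [∀ i, DecidablePred (P i)] :
    ∑ ω, μ ω * ((univ.filter (fun i => P i ω)).card : ℝ) =
      ∑ i, ∑ ω ∈ univ.filter (P i), μ ω := by
  simp only [card_filter, Nat.cast_sum, Nat.cast_ite, Nat.cast_one, Nat.cast_zero, mul_sum,
    mul_ite, mul_one, mul_zero, sum_filter]
  exact sum_comm

theorem card_filter_mem_le_of_injective {ι U : Type*} [Fintype ι] [DecidableEq U] {f : ι → U}
    (hf : Function.Injective f) (s : Finset U) :
    (univ.filter (fun i => f i ∈ s)).card ≤ s.card :=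
  card_le_card_of_injOn f (fun _ hi => (mem_filter.1 hi).2) hf.injOn

theorem stmt_1_general {Ω U Z : Type*} [Fintype Ω] [DecidableEq U]
    (μ : Ω → ℝ) (hμ0 : ∀ ω, 0 ≤ μ ω)
    (q : ℕ) (L : Ω → Finset U) (z : Fin q → Ω → Z) (x : Fin q → Ω → U)
    (hdist : ∀ ω, ∀ i j : Fin q, i ≠ j → x i ω ≠ x j ω)
    (δ : ℝ) (hδ : 0 < δ)
    (Hist : Fin q → Ω → Ω → Prop)
    (hHist : ∀ i ω ω', Hist i ω ω' ↔
      (∀ j : Fin q, j ≤ i → z j ω' = z j ω) ∧ (∀ j : Fin q, j < i → x j ω' = x j ω))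
    (heavy : Fin q → Ω → Prop)
    (hheavy : ∀ i ω, heavy i ω ↔
      δ * ∑ ω' ∈ Finset.univ.filter (fun ω' => Hist i ω ω'), μ ω' ≤
        ∑ ω' ∈ Finset.univ.filter (fun ω' => Hist i ω ω' ∧ x i ω' ∈ L ω'), μ ω')
    (S : Ω → Finset U)
    (hS : ∀ ω, S ω = (Finset.univ.filter (fun i => heavy i ω)).image (fun i => x i ω)) :
    ∑ ω, μ ω * ((S ω).card : ℝ) ≤ (∑ ω, μ ω * ((L ω).card : ℝ)) / δ := by
  let history (i : Fin q) (ω : Ω) : ({j // j ≤ i} → Z) × ({j // j < i} → U) :=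
    (fun j => z j ω, fun j => x j ω)
  have hHist_eq : ∀ i ω ω', Hist i ω ω' ↔ history i ω' = history i ω := fun i ω ω' => by
    simp only [hHist, history, Prod.ext_iff, funext_iff, Subtype.forall]
  have hheavy_prob : ∀ i, δ * ∑ ω ∈ univ.filter (heavy i), μ ω ≤
      ∑ ω ∈ univ.filter (fun ω => x i ω ∈ L ω), μ ω := fun i => by
    simp only [hheavy, hHist_eq]
    convert mul_sum_filter_condProb_ge_le μ hμ0 (history i) (fun ω => x i ω ∈ L ω) δ
  rw [le_div_iff₀ hδ, mul_comm]
  calc δ * ∑ ω, μ ω * ((S ω).card : ℝ)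
      ≤ δ * ∑ ω, μ ω * ((univ.filter (fun i => heavy i ω)).card : ℝ) := by
        gcongr with ω
        · exact hμ0 ω
        · rw [hS]; exact card_image_le
    _ = ∑ i, δ * ∑ ω ∈ univ.filter (heavy i), μ ω := by rw [sum_mul_card_filter, mul_sum]
    _ ≤ ∑ i, ∑ ω ∈ univ.filter (fun ω => x i ω ∈ L ω), μ ω := sum_le_sum fun i _ => hheavy_prob i
    _ = ∑ ω, μ ω * ((univ.filter (fun i => x i ω ∈ L ω)).card : ℝ) :=
        (sum_mul_card_filter μ (fun i ω => x i ω ∈ L ω)).symm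
    _ ≤ ∑ ω, μ ω * ((L ω).card : ℝ) := by
        gcongr with ω
        · exact hμ0 ω
        · exact card_filter_mem_le_of_injective
            (fun i j hij => by_contra fun hne => hdist ω i j hne hij) (L ω)

/-- Heavy-query lemma (Austrin et al.): the expected number of δ-heavy query
points is at most E[|L|]/δ.  Here `Hist i ω ω'` says that `ω'` agrees with
`ω` on the history z₁,x₁,…,z_i, and `heavy i ω` says that, conditioned on
this history, the probability that `x i` lies in `L` is at least δ. -/
theorem stmt_1 {Ω U Z : Type*} [Fintype Ω] [DecidableEq U]
    (μ : Ω → ℝ) (hμ0 : ∀ ω, 0 ≤ μ ω) (hμ1 : ∑ ω, μ ω = 1)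
    (q : ℕ) (L : Ω → Finset U) (z : Fin q → Ω → Z) (x : Fin q → Ω → U)
    (hdist : ∀ ω, ∀ i j : Fin q, i ≠ j → x i ω ≠ x j ω)
    (δ : ℝ) (hδ : 0 < δ)
    (Hist : Fin q → Ω → Ω → Prop)
    (hHist : ∀ i ω ω', Hist i ω ω' ↔
      (∀ j : Fin q, j ≤ i → z j ω' = z j ω) ∧ (∀ j : Fin q, j < i → x j ω' = x j ω))
    (heavy : Fin q → Ω → Prop)
    (hheavy : ∀ i ω, heavy i ω ↔
      δ * ∑ ω' ∈ Finset.univ.filter (fun ω' => Hist i ω ω'), μ ω' ≤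
        ∑ ω' ∈ Finset.univ.filter (fun ω' => Hist i ω ω' ∧ x i ω' ∈ L ω'), μ ω')
    (S : Ω → Finset U)
    (hS : ∀ ω, S ω = (Finset.univ.filter (fun i => heavy i ω)).image (fun i => x i ω)) :
    ∑ ω, μ ω * ((S ω).card : ℝ) ≤ (∑ ω, μ ω * ((L ω).card : ℝ)) / δ :=
  stmt_1_general μ hμ0 q L z x hdist δ hδ Hist hHist heavy hheavy S hS
end

section
/- Fix finite sets of oracles and seeds, a deterministic function G mapping an oracle H ∈ Func and seed s to an output g and a transcript τ (a partial function recording queries of G and H's answers, so H extends τ). Fix an output g₀ and a partial function h₀ such that some pair (H,s) with H extending h₀ satisfies G(H,s) = (g₀, ·). Suppose G's computation on (H,s) depends only on the restriction of H to the domain of its transcript (i.e., if G(H₀,s)=(g,τ) and H₁ agrees with H₀ on the domain of τ, then G(H₁,s)=(g,τ)). Then the following two distributions on total functions are identical: (a) sample H uniformly from the set of functions extending h₀ conditioned on the event that a uniformly random seed s yields output g₀; (b) sample a transcript τ from the conditional distribution of transcripts given output g₀ and given that the oracle extends h₀, independently sample H uniformly among functions extending h₀, and output H reprogrammed to agree with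 τ on the domain of τ. -/
open scoped Classical

/-- `Extends H h` : the total function `H` agrees with the partial function
`h` wherever `h` is defined. -/
def Extends {X Y : Type*} (H : X → Y) (h : X → Option Y) : Prop :=
  ∀ x y, h x = some y → H x = y

/-- `reprog H τ` : the function `H` reprogrammed to agree with the partial
function `τ` on its domain. -/
def reprog {X Y : Type*} (H : X → Y) (τ : X → Option Y) : X → Y :=
  fun x => (τ x).getD (H x)

/-! Pair the conditioned oracle `H` (with seed `s`) with an independent fresh oracle `H'`
extending `h₀`, and swap `H` and `H'` at every point that the transcript `τ` of `G H s`
leaves unqueried. Since `G` only looks at `H` on the domain of `τ`, the swap leaves `G`'s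
output and transcript unchanged, so it is an involution of the triples `(H, s, H')`. It
preserves extension of `h₀`, and since `H` agrees with `τ`, reprogramming the swapped fresh
oracle along `τ` gives back `H`; hence it maps the triples counted on the left bijectively
onto those counted on the right. -/

namespace Extends

variable {X Y : Type*}

lemma ite {H H' : X → Y} {h : X → Option Y} (hH : Extends H h) (hH' : Extends H' h)
    (p : X → Prop) [DecidablePred p] : Extends (fun x => if p x then H x else H' x) h := by
  intro x y hxy
  by_cases hp : p x <;> simp [hp, hH x y hxy, hH' x y hxy]

end Extends

section swapOff

variable {X Y : Type*}

def swapOff (τ : X → Option Y) (H H' : X → Y) : (X → Y) × (X → Y) :=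
  (fun x => if τ x = none then H' x else H x, fun x => if τ x = none then H x else H' x)

lemma swapOff_swapOff (τ : X → Option Y) (H H' : X → Y) :
    swapOff τ (swapOff τ H H').1 (swapOff τ H H').2 = (H, H') := by
  ext x <;> by_cases hx : τ x = none <;> simp [swapOff, hx]

lemma extends_swapOff_iff {H H' : X → Y} {h τ : X → Option Y} :
    Extends (swapOff τ H H').1 h ∧ Extends (swapOff τ H H').2 h ↔
      Extends H h ∧ Extends H' h := by
  have swap_extends : ∀ {F F' : X → Y}, Extends F h → Extends F' h →
      Extends (swapOff τ F F').1 h ∧ Extends (swapOff τ F F').2 h :=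
    fun hF hF' => ⟨hF'.ite hF _, hF.ite hF' _⟩
  refine ⟨fun hswap => ?_, fun hH => swap_extends hH.1 hH.2⟩
  simpa only [swapOff_swapOff] using swap_extends hswap.1 hswap.2

lemma reprog_swapOff_snd {H : X → Y} {τ : X → Option Y} (hH : Extends H τ) (H' : X → Y) :
    reprog (swapOff τ H H').2 τ = H := by
  funext x
  cases hx : τ x with
  | none => simp [reprog, swapOff, hx]
  | some y => simp [reprog, hx, hH x y hx]

end swapOff

section resample

variable {X Y S O : Type*}

def resample (G : (X → Y) → S → O × (X → Option Y)) (q : ((X → Y) × S) × (X → Y)) :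
    ((X → Y) × S) × (X → Y) :=
  let τ := (G q.1.1 q.1.2).2
  (((swapOff τ q.1.1 q.2).1, q.1.2), (swapOff τ q.1.1 q.2).2)

variable {G : (X → Y) → S → O × (X → Option Y)}
  (hloc : ∀ (H₀ H₁ : X → Y) (s : S),
    (∀ x, (G H₀ s).2 x ≠ none → H₁ x = H₀ x) → G H₁ s = G H₀ s)

include hloc in
lemma apply_swapOff_fst_transcript (H H' : X → Y) (s : S) :
    G (swapOff (G H s).2 H H').1 s = G H s :=
  hloc _ _ s fun x hx => by simp [swapOff, hx]

include hloc in
lemma resample_involutive : Function.Involutive (resample G) := by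
  rintro ⟨⟨H, s⟩, H'⟩
  simp only [resample, apply_swapOff_fst_transcript hloc, swapOff_swapOff]

end resample

lemma sum_card_filter_eq_card_filter_product {α β : Type*} (A : Finset α) (B : Finset β)
    (p : α → β → Prop) [∀ a, DecidablePred (p a)] :
    ∑ a ∈ A, (B.filter (p a)).card = ((A ×ˢ B).filter fun q => p q.1 q.2).card := by
  simp only [Finset.card_filter, Finset.sum_product]

theorem stmt_3_general {X Y S O : Type*} [Fintype X] [Fintype Y] [Fintype S] [DecidableEq Y]
    (G : (X → Y) → S → O × (X → Option Y))
    (hloc : ∀ (H₀ H₁ : X → Y) (s : S),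
      (∀ x, (G H₀ s).2 x ≠ none → H₁ x = H₀ x) → G H₁ s = G H₀ s)
    (htrans : ∀ (H : X → Y) (s : S) (x : X) (y : Y), (G H s).2 x = some y → H x = y)
    (g₀ : O) (h₀ : X → Option Y)
    (A : Finset ((X → Y) × S))
    (hA : A = Finset.univ.filter (fun p => Extends p.1 h₀ ∧ (G p.1 p.2).1 = g₀))
    (Ext : Finset (X → Y))
    (hExt : Ext = Finset.univ.filter (fun H => Extends H h₀)) :
    ∀ Hstar : X → Y,
      (A.filter (fun p => p.1 = Hstar)).card * Ext.card =
        ∑ p ∈ A, (Ext.filter (fun H' => reprog H' ((G p.1 p.2).2) = Hstar)).card := by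
  intro Hstar
  rw [← Finset.card_product,
    sum_card_filter_eq_card_filter_product A Ext fun p H' => reprog H' (G p.1 p.2).2 = Hstar]
  refine Finset.card_equiv (resample_involutive hloc).toPerm fun ⟨⟨H, s⟩, H'⟩ => ?_
  have hτ : Extends H (G H s).2 := htrans H s
  have hG := apply_swapOff_fst_transcript hloc H H' s
  simp only [Function.Involutive.coe_toPerm, resample, Finset.mem_filter, Finset.mem_product,
    hA, hExt, Finset.mem_univ, true_and, hG, reprog_swapOff_snd hτ]
  have hswap : _ ↔ Extends H h₀ ∧ Extends H' h₀ := extends_swapOff_iff (τ := (G H s).2)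
  tauto

/-- Resampling lemma: the conditional distribution of the oracle given output
g₀ and extension of h₀ coincides with: sampling a transcript τ from the
conditional transcript distribution, sampling a fresh uniform oracle extending
h₀, and reprogramming it along τ.  Both probabilities are expressed after
clearing the common denominators |A|·|Ext|. -/
theorem stmt_3 {X Y S O : Type*} [Fintype X] [Fintype Y] [Fintype S] [DecidableEq Y]
    (G : (X → Y) → S → O × (X → Option Y))
    (hloc : ∀ (H₀ H₁ : X → Y) (s : S),
      (∀ x, (G H₀ s).2 x ≠ none → H₁ x = H₀ x) → G H₁ s = G H₀ s)
    (htrans : ∀ (H : X → Y) (s : S) (x : X) (y : Y), (G H s).2 x = some y → H x = y)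
    (g₀ : O) (h₀ : X → Option Y)
    (hne : ∃ (H : X → Y) (s : S), Extends H h₀ ∧ (G H s).1 = g₀)
    (A : Finset ((X → Y) × S))
    (hA : A = Finset.univ.filter (fun p => Extends p.1 h₀ ∧ (G p.1 p.2).1 = g₀))
    (Ext : Finset (X → Y))
    (hExt : Ext = Finset.univ.filter (fun H => Extends H h₀)) :
    ∀ Hstar : X → Y,
      (A.filter (fun p => p.1 = Hstar)).card * Ext.card =
        ∑ p ∈ A, (Ext.filter (fun H' => reprog H' ((G p.1 p.2).2) = Hstar)).card :=
  stmt_3_general G hloc htrans g₀ h₀ A hA Ext hExt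
end

section
/- Let G be as in the resampling setting, fix g₀ and a partial function h₀, and let R_{g₀,τ,h₀} be the set of pairs (H,s) with H extending h₀ such that G(H,s) = (g₀,τ). Then for any transcript τ consistent with h₀ and any two total functions H₀, H₁ both extending h₀ ∪ τ, the uniform distribution on oracle-seed pairs conditioned on R_{g₀,τ,h₀} assigns equal probability to the events {first coordinate = H₀} and {first coordinate = H₁}. -/
open scoped Classical

/-!
The seed fully determines which oracle entries `G` reads, and every entry it reads is recorded
in the transcript. So two oracles that both agree with the transcript `τ` are indistinguishable
to `G` on any seed producing `(g₀, τ)`: the same seeds produce `(g₀, τ)` under either oracle.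
-/

section Oracle

variable {X Y S O : Type*}

theorem Extends.eq_of_ne_none {H₀ H₁ : X → Y} {h : X → Option Y}
    (hH₀ : Extends H₀ h) (hH₁ : Extends H₁ h) (x : X) (hx : h x ≠ none) : H₁ x = H₀ x := by
  obtain ⟨y, hy⟩ := Option.ne_none_iff_exists'.mp hx
  rw [hH₀ x y hy, hH₁ x y hy]

variable (G : (X → Y) → S → O × (X → Option Y))
    (hloc : ∀ (H₀ H₁ : X → Y) (s : S),
      (∀ x, (G H₀ s).2 x ≠ none → H₁ x = H₀ x) → G H₁ s = G H₀ s)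
include hloc

theorem output_eq_of_extends_transcript {H₀ H₁ : X → Y} {s : S} {g₀ : O} {τ : X → Option Y}
    (hH₀ : Extends H₀ τ) (hH₁ : Extends H₁ τ) (hs : G H₀ s = (g₀, τ)) :
    G H₁ s = (g₀, τ) := by
  rw [← hs]
  exact hloc H₀ H₁ s (by rw [hs]; exact hH₀.eq_of_ne_none hH₁)

theorem output_eq_iff_of_extends_transcript {H₀ H₁ : X → Y} {g₀ : O} {τ : X → Option Y}
    (hH₀ : Extends H₀ τ) (hH₁ : Extends H₁ τ) (s : S) :
    G H₀ s = (g₀, τ) ↔ G H₁ s = (g₀, τ) :=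
  ⟨output_eq_of_extends_transcript G hloc hH₀ hH₁,
    output_eq_of_extends_transcript G hloc hH₁ hH₀⟩

end Oracle

/-- Conditioned on `R_{g₀,τ,h₀}`, the uniform distribution gives the event `{first coordinate = H}`
a probability proportional to the number of seeds `s` with `(H, s) ∈ R_{g₀,τ,h₀}`. -/
theorem stmt_5_general {X Y S O : Type*} [Fintype S]
    (G : (X → Y) → S → O × (X → Option Y))
    (hloc : ∀ (H₀ H₁ : X → Y) (s : S),
      (∀ x, (G H₀ s).2 x ≠ none → H₁ x = H₀ x) → G H₁ s = G H₀ s)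
    (g₀ : O) (τ h₀ : X → Option Y)
    (H₀ H₁ : X → Y)
    (hH₀ : Extends H₀ h₀ ∧ Extends H₀ τ) (hH₁ : Extends H₁ h₀ ∧ Extends H₁ τ) :
    (Finset.univ.filter (fun s : S => Extends H₀ h₀ ∧ G H₀ s = (g₀, τ))).card =
      (Finset.univ.filter (fun s : S => Extends H₁ h₀ ∧ G H₁ s = (g₀, τ))).card := by
  simp only [hH₀.1, hH₁.1, true_and,
    output_eq_iff_of_extends_transcript G hloc hH₀.2 hH₁.2]

/-- The uniform distribution on oracle-seed pairs conditioned on the relation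
R_{g₀,τ,h₀} assigns equal probability to any two oracles extending h₀ ∪ τ:
equivalently, the sets of seeds pairing with them in the relation have equal
cardinality. -/
theorem stmt_5 {X Y S O : Type*} [Fintype S]
    (G : (X → Y) → S → O × (X → Option Y))
    (hloc : ∀ (H₀ H₁ : X → Y) (s : S),
      (∀ x, (G H₀ s).2 x ≠ none → H₁ x = H₀ x) → G H₁ s = G H₀ s)
    (g₀ : O) (τ h₀ : X → Option Y)
    (hcons : ∀ x y y', h₀ x = some y → τ x = some y' → y = y')
    (H₀ H₁ : X → Y)
    (hH₀ : Extends H₀ h₀ ∧ Extends H₀ τ) (hH₁ : Extends H₁ h₀ ∧ Extends H₁ τ) :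
    (Finset.univ.filter (fun s : S => Extends H₀ h₀ ∧ G H₀ s = (g₀, τ))).card =
      (Finset.univ.filter (fun s : S => Extends H₁ h₀ ∧ G H₁ s = (g₀, τ))).card :=
  stmt_5_general G hloc g₀ τ h₀ H₀ H₁ hH₀ hH₁
end
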